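/- Let m ≥ 3 and let ℓ ∈ {⌊(2m+2)/3⌋, m-2} with m/2 ≤ ℓ < m. Then the genus of the numerical semigroup ⟨ℓ, m, m+1⟩ equals (m² - m + 4)/6 if m ≡ 2 (mod 3), and (m² - m)/6 otherwise. -/
import Mathlib
open Finset
def PA (m q r : ℕ) : Prop :=
  q < r ∧ (r < m - m/3 ∨ q + (m - m/3) < r) ∧ (q = 0 ∨ r < m/3 + m%3 ∨ q - 1 + m/3 + m%3 < r)

def PB (m q r : ℕ) : Prop :=
  q < r ∧ (((m+r) % 2 = 1 ∧ r + 2*q + 1 ≤ m) ∨ ((m+r) % 2 = 0 ∧ r + 2*q + 4 ≤ m))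

instance (m q r : ℕ) : Decidable (PA m q r) := by unfold PA; infer_instance
instance (m q r : ℕ) : Decidable (PB m q r) := by unfold PB; infer_instance

def cntA (m q : ℕ) : ℕ := ((range m).filter (PA m q)).card
def cntB (m q : ℕ) : ℕ := ((range m).filter (PB m q)).card

def target (m : ℕ) : ℕ := if m % 3 = 2 then (m^2 - m + 4)/6 else (m^2 - m)/6

lemma target_step (m : ℕ) : target (m+6) = target m + (2*m+5) := by
  unfold target
  obtain ⟨k, j, hj, rfl⟩ : ∃ k j, j < 6 ∧ m = 6*k+j := ⟨m/6, m%6, by omega, by omega⟩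
  obtain ⟨t, ht⟩ : ∃ t, t = k*k := ⟨_, rfl⟩
  have e1 : (6*k+j)^2 = 36*t + 12*j*k + j^2 := by rw [ht]; ring
  have e2 : (6*k+j+6)^2 = 36*t + 12*j*k + j^2 + 72*k + 12*j + 36 := by rw [ht]; ring
  have hkt : k ≤ t := by subst ht; nlinarith
  clear ht
  interval_cases j <;> simp only [e1, e2] <;> split_ifs <;> omega





lemma cntB_shift (m q : ℕ) : cntB (m+6) (q+2) = cntB m q := by
  unfold cntB
  apply Finset.card_bij' (i := fun r _ => r - 2) (j := fun r _ => r + 2) <;>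
    (intro a ha; simp only [mem_filter, mem_range, PB] at *) <;> omega

lemma cntA_shift (m q : ℕ) (hm : 3 ≤ m) : cntA (m+6) (q+2) = cntA m q := by
  unfold cntA
  apply Finset.card_bij'
    (i := fun r _ => if r < (m+6)/3 + (m+6)%3 then r - 2 else if r < (m+6) - (m+6)/3 then r - 4 else r - 6)
    (j := fun r _ => if r < m/3 + m%3 then r + 2 else if r < m - m/3 then r + 4 else r + 6) <;>
    (intro a ha; simp only [mem_filter, mem_range, PA] at *) <;> split_ifs <;> (try simp only [true_or, or_true, and_true, true_and]) <;> omega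

lemma cntA_zero (M : ℕ) (h : 9 ≤ M) : cntA M 0 = M - 2 := by
  unfold cntA
  rw [← Finset.card_range (M-2)]
  apply Finset.card_bij'
    (i := fun r _ => if r < M - M/3 then r - 1 else r - 2)
    (j := fun s _ => if s + 1 < M - M/3 then s + 1 else s + 2) <;>
    (intro a ha; simp only [mem_filter, mem_range, PA] at *) <;> split_ifs <;> (try simp only [true_or, or_true, and_true, true_and]) <;> omega

lemma cntA_one (M : ℕ) (h : 9 ≤ M) : cntA M 1 = M - 5 := by
  unfold cntA
  rw [← Finset.card_range (M-5)]
  apply Finset.card_bij'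
    (i := fun r _ => if r < M/3 + M%3 then r - 2 else if r < M - M/3 then r - 3 else r - 5)
    (j := fun s _ => if s < M/3 + M%3 - 2 then s + 2 else if s < M - M/3 - 3 then s + 3 else s + 5) <;>
    (intro a ha; simp only [mem_filter, mem_range, PA] at *) <;> split_ifs <;> (try simp only [true_or, or_true, and_true, true_and]) <;> omega

lemma cntB_zero (M : ℕ) (h : 9 ≤ M) : cntB M 0 = M - 2 := by
  unfold cntB
  rw [← Finset.card_range (M-2)]
  apply Finset.card_bij'
    (i := fun r _ => if r < M - 2 then r - 1 else r - 2)
    (j := fun s _ => if s < M - 3 then s + 1 else s + 2) <;>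
    (intro a ha; simp only [mem_filter, mem_range, PB] at *) <;> split_ifs <;> (try simp only [true_or, or_true, and_true, true_and]) <;> omega

lemma cntB_one (M : ℕ) (h : 9 ≤ M) : cntB M 1 = M - 5 := by
  unfold cntB
  rw [← Finset.card_range (M-5)]
  apply Finset.card_bij'
    (i := fun r _ => if r = M - 3 then M - 6 else r - 2)
    (j := fun s _ => if s = M - 6 then M - 3 else s + 2) <;>
    (intro a ha; simp only [mem_filter, mem_range, PB] at *) <;> split_ifs <;> (try simp only [true_or, or_true, and_true, true_and]) <;> omega

lemma cntA_ge (m q : ℕ) (h : m ≤ q) : cntA m q = 0 := by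
  unfold cntA
  rw [Finset.card_eq_zero, Finset.filter_eq_empty_iff]
  intro r hr; simp only [mem_range] at hr; simp only [PA]; omega

lemma cntB_ge (m q : ℕ) (h : m ≤ q) : cntB m q = 0 := by
  unfold cntB
  rw [Finset.card_eq_zero, Finset.filter_eq_empty_iff]
  intro r hr; simp only [mem_range] at hr; simp only [PB]; omega



lemma sum_shift2 (f : ℕ → ℕ) (n : ℕ) :
    ∑ q ∈ range (n+2), f q = f 0 + f 1 + ∑ q ∈ range n, f (q+2) := by
  rw [Finset.sum_range_succ', Finset.sum_range_succ']
  ring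

lemma sumA (m : ℕ) (hm : 3 ≤ m) : ∑ q ∈ range m, cntA m q = target m := by
  induction m using Nat.strong_induction_on with
  | _ m ih =>
    rcases le_or_gt m 8 with h8 | h8
    · interval_cases m <;> decide
    · obtain ⟨n, rfl⟩ : ∃ n, m = n + 6 := ⟨m - 6, by omega⟩
      have hn : 3 ≤ n := by omega
      have e1 : ∑ q ∈ range (n+6), cntA (n+6) q
          = cntA (n+6) 0 + cntA (n+6) 1 + ∑ q ∈ range (n+4), cntA (n+6) (q+2) :=
        sum_shift2 (cntA (n+6)) (n+4)
      have e2 : ∑ q ∈ range (n+4), cntA (n+6) (q+2) = ∑ q ∈ range (n+4), cntA n q :=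
        Finset.sum_congr rfl (fun q _ => cntA_shift n q hn)
      have e3 : ∑ q ∈ range (n+4), cntA n q = ∑ q ∈ range n, cntA n q := by
        rw [← Finset.sum_subset (Finset.range_subset_range.2 (by omega : n ≤ n+4))]
        intro x _ hx
        exact cntA_ge n x (by simpa [Finset.mem_range] using hx)
      rw [e1, e2, e3, ih n (by omega) hn, cntA_zero _ (by omega), cntA_one _ (by omega),
        target_step]
      omega

lemma sumB (m : ℕ) (hm : 4 ≤ m) : ∑ q ∈ range m, cntB m q = target m := by
  induction m using Nat.strong_induction_on with
  | _ m ih =>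
    rcases le_or_gt m 9 with h8 | h8
    · interval_cases m <;> decide
    · obtain ⟨n, rfl⟩ : ∃ n, m = n + 6 := ⟨m - 6, by omega⟩
      have hn : 4 ≤ n := by omega
      have e1 : ∑ q ∈ range (n+6), cntB (n+6) q
          = cntB (n+6) 0 + cntB (n+6) 1 + ∑ q ∈ range (n+4), cntB (n+6) (q+2) :=
        sum_shift2 (cntB (n+6)) (n+4)
      have e2 : ∑ q ∈ range (n+4), cntB (n+6) (q+2) = ∑ q ∈ range (n+4), cntB n q :=
        Finset.sum_congr rfl (fun q _ => cntB_shift n q)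
      have e3 : ∑ q ∈ range (n+4), cntB n q = ∑ q ∈ range n, cntB n q := by
        rw [← Finset.sum_subset (Finset.range_subset_range.2 (by omega : n ≤ n+4))]
        intro x _ hx
        exact cntB_ge n x (by simpa [Finset.mem_range] using hx)
      rw [e1, e2, e3, ih n (by omega) hn, cntB_zero _ (by omega), cntB_one _ (by omega),
        target_step]
      omega


def gapF (m : ℕ) (P : ℕ → ℕ → Prop) [∀ q r, Decidable (P q r)] : Finset ℕ :=
  (range m).biUnion (fun q => ((range m).filter (P q)).image (fun r => q*m + r))

lemma mem_gapF {m x : ℕ} {P : ℕ → ℕ → Prop} [∀ q r, Decidable (P q r)] :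
    x ∈ gapF m P ↔ ∃ q r, q < m ∧ r < m ∧ P q r ∧ x = q*m + r := by
  unfold gapF
  simp only [mem_biUnion, mem_image, mem_filter, mem_range]
  constructor
  · rintro ⟨q, hq, r, ⟨hr, hP⟩, rfl⟩; exact ⟨q, r, hq, hr, hP, rfl⟩
  · rintro ⟨q, r, hq, hr, hP, rfl⟩; exact ⟨q, hq, r, ⟨hr, hP⟩, rfl⟩

lemma qr_unique {m q1 r1 q2 r2 : ℕ} (h1 : r1 < m) (h2 : r2 < m)
    (e : q1*m + r1 = q2*m + r2) : q1 = q2 := by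
  rcases lt_trichotomy q1 q2 with h|h|h
  · exfalso
    have h3 : (q1+1)*m ≤ q2*m := Nat.mul_le_mul_right m h
    have h4 : (q1+1)*m = q1*m + m := by ring
    linarith
  · exact h
  · exfalso
    have h3 : (q2+1)*m ≤ q1*m := Nat.mul_le_mul_right m h
    have h4 : (q2+1)*m = q2*m + m := by ring
    linarith

lemma card_gapF (m : ℕ) (P : ℕ → ℕ → Prop) [∀ q r, Decidable (P q r)] :
    (gapF m P).card = ∑ q ∈ range m, ((range m).filter (P q)).card := by
  unfold gapF
  rw [Finset.card_biUnion]
  · exact Finset.sum_congr rfl fun q _ =>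
      Finset.card_image_of_injective _ (fun r1 r2 h => Nat.add_left_cancel h)
  · intro q1 h1 q2 h2 hne
    simp only [Finset.disjoint_left, mem_image, mem_filter, mem_range]
    rintro x ⟨r1, ⟨hr1, _⟩, rfl⟩ ⟨r2, ⟨hr2, _⟩, he⟩
    exact hne (qr_unique hr2 hr1 he).symm

lemma redA (l m c : ℕ) (hc : c < 3) (hl : 3*l = 2*m + c) :
    ∀ α β γ x, x = α*l + β*m + γ*(m+1) → ∃ a b g, a ≤ 2 ∧ x = a*l + b*m + g*(m+1) := by
  intro α
  induction α using Nat.strong_induction_on with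
  | _ α ih =>
    intro β γ x hx
    rcases le_or_gt α 2 with h|h
    · exact ⟨α, β, γ, h, hx⟩
    · obtain ⟨a, rfl⟩ : ∃ a, α = a + 3 := ⟨α - 3, by omega⟩
      have hlz : (3*l : ℤ) = 2*m + c := by exact_mod_cast hl
      interval_cases c
      · refine ih a (by omega) (β + 2) γ x ?_
        rw [hx]; zify; linear_combination hlz
      · refine ih a (by omega) (β + 1) (γ + 1) x ?_
        rw [hx]; zify; linear_combination hlz
      · refine ih a (by omega) β (γ + 2) x ?_
        rw [hx]; zify; linear_combination hlz

lemma caseA (m l : ℕ) (hm : 3 ≤ m) (hl : 3*l = 2*m + m%3) :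
    {x : ℕ | ¬ ∃ α β γ : ℕ, x = α*l + β*m + γ*(m+1)}.ncard = target m := by
  obtain ⟨d, c, hc, hd, hld⟩ : ∃ d c, c < 3 ∧ m = 3*d + c ∧ l = 2*d + c :=
    ⟨m/3, m%3, by omega, by omega, by omega⟩
  subst hd; subst hld
  have hd1 : 1 ≤ d := by omega
  have hset : {x : ℕ | ¬ ∃ α β γ : ℕ, x = α*(2*d+c) + β*(3*d+c) + γ*((3*d+c)+1)}
      = ↑(gapF (3*d+c) (PA (3*d+c))) := by
    ext x
    simp only [Set.mem_setOf_eq, Finset.coe_sort_coe, Finset.mem_coe, mem_gapF]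
    constructor
    · intro hx
      have hrep0 : ∀ (a b g : ℕ), x ≠ a*(2*d+c) + b*(3*d+c) + g*((3*d+c)+1) :=
        fun a b g h => hx ⟨a, b, g, h⟩
      obtain ⟨q, r, hr, hxqr⟩ : ∃ q r, r < 3*d+c ∧ x = q*(3*d+c) + r :=
        ⟨x / (3*d+c), x % (3*d+c), Nat.mod_lt _ (by omega), by
          rw [Nat.mul_comm (x / (3*d+c)) (3*d+c), Nat.div_add_mod]⟩
      have hqr : q < r := by
        by_contra hcon
        obtain ⟨b, hb⟩ : ∃ b, q = r + b := ⟨q - r, by omega⟩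
        exact hrep0 0 b r (by rw [hxqr, hb]; ring)
      refine ⟨q, r, by omega, hr, ?_, hxqr⟩
      by_contra hnP
      have hcase : (2*d+c ≤ r ∧ r ≤ q + (2*d+c)) ∨ (1 ≤ q ∧ d+c ≤ r ∧ r ≤ q-1+(d+c)) := by
        unfold PA at hnP; omega
      rcases hcase with ⟨hg, hgb⟩ | ⟨hq1, hg, hgb⟩
      · obtain ⟨g, hgg⟩ : ∃ g, r = (2*d+c) + g := ⟨r - (2*d+c), by omega⟩
        obtain ⟨b, hbb⟩ : ∃ b, q = g + b := ⟨q - g, by omega⟩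
        exact hrep0 1 b g (by rw [hxqr, hgg, hbb]; ring)
      · obtain ⟨g, hgg⟩ : ∃ g, r = (d+c) + g := ⟨r - (d+c), by omega⟩
        obtain ⟨b, hbb⟩ : ∃ b, q = 1 + g + b := ⟨q - 1 - g, by omega⟩
        exact hrep0 2 b g (by rw [hxqr, hgg, hbb]; ring)
    · rintro ⟨q, r, hq, hr, hP, rfl⟩ ⟨α, β, γ, hrep⟩
      obtain ⟨a, b, g, ha2, heq⟩ :=
        redA (2*d+c) (3*d+c) c hc (by ring) α β γ _ hrep
      unfold PA at hP
      have key : q*(3*d+c) + r + a*d = (a+b+g)*(3*d+c) + g := by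
        zify at heq ⊢; linear_combination heq
      rcases le_or_gt (a+b+g) q with hu | hu
      · have h1 : (a+b+g)*(3*d+c) ≤ q*(3*d+c) := Nat.mul_le_mul_right _ hu
        have h2 : g ≤ a+b+g := by omega
        have h3 : q < r := hP.1
        nlinarith [key, h1, h2, h3, hu]
      · obtain ⟨v, hv1, hvu⟩ : ∃ v, 1 ≤ v ∧ a+b+g = q + v := ⟨a+b+g - q, by omega, by omega⟩
        rw [hvu] at key
        have key2 : v*(3*d+c) + g = r + a*d := by
          zify at key ⊢; linear_combination -key
        rcases le_or_gt 2 v with hv2 | hv2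
        · have h2 : 2*(3*d+c) ≤ v*(3*d+c) := Nat.mul_le_mul_right _ hv2
          have h3 : a*d ≤ 2*d := Nat.mul_le_mul_right _ ha2
          linarith
        · have hv : v = 1 := by omega
          subst hv
          have hag : a + g ≤ q + 1 := by omega
          interval_cases a <;> omega
  rw [hset, Set.ncard_coe_finset, card_gapF]
  have : ∀ q ∈ range (3*d+c), ((range (3*d+c)).filter (PA (3*d+c) q)).card = cntA (3*d+c) q :=
    fun q _ => rfl
  rw [Finset.sum_congr rfl this, sumA _ (by omega)]


lemma caseB (m l : ℕ) (hm : 4 ≤ m) (hd : m = l + 2) :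
    {x : ℕ | ¬ ∃ α β γ : ℕ, x = α*l + β*m + γ*(m+1)}.ncard = target m := by
  subst hd
  have hl2 : 2 ≤ l := by omega
  have hset : {x : ℕ | ¬ ∃ α β γ : ℕ, x = α*l + β*(l+2) + γ*((l+2)+1)}
      = ↑(gapF (l+2) (PB (l+2))) := by
    ext x
    simp only [Set.mem_setOf_eq, Finset.coe_sort_coe, Finset.mem_coe, mem_gapF]
    constructor
    · intro hx
      have hrep0 : ∀ (a b g : ℕ), x ≠ a*l + b*(l+2) + g*((l+2)+1) :=
        fun a b g h => hx ⟨a, b, g, h⟩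
      obtain ⟨q, r, hr, hxqr⟩ : ∃ q r, r < l+2 ∧ x = q*(l+2) + r :=
        ⟨x / (l+2), x % (l+2), Nat.mod_lt _ (by omega), by
          rw [Nat.mul_comm (x / (l+2)) (l+2), Nat.div_add_mod]⟩
      have hqr : q < r := by
        by_contra hcon
        obtain ⟨b, hb⟩ : ∃ b, q = r + b := ⟨q - r, by omega⟩
        exact hrep0 0 b r (by rw [hxqr, hb]; ring)
      refine ⟨q, r, by omega, hr, ?_, hxqr⟩
      by_contra hnP
      unfold PB at hnP
      have hpar : ((l+2)+r) % 2 = 1 ∨ ((l+2)+r) % 2 = 0 := by omega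
      rcases hpar with hp | hp
      · obtain ⟨k, hk, hkq⟩ : ∃ k, l+3 = r + 2*k ∧ k ≤ q := ⟨(l+3-r)/2, by omega, by omega⟩
        obtain ⟨b, hb⟩ : ∃ b, q = k + b := ⟨q - k, by omega⟩
        refine hrep0 k b 1 ?_
        rw [hxqr, hb]
        zify at hk ⊢
        linear_combination -hk
      · obtain ⟨k, hk, hkq⟩ : ∃ k, l+2 = r + 2*k ∧ k ≤ q + 1 := ⟨(l+2-r)/2, by omega, by omega⟩
        obtain ⟨b, hb⟩ : ∃ b, q + 1 = k + b := ⟨q+1-k, by omega⟩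
        refine hrep0 k b 0 ?_
        rw [hxqr]
        zify at hk hb ⊢
        linear_combination (l+2 : ℤ) * hb - hk
    · rintro ⟨q, r, hq, hr, hP, rfl⟩ ⟨α, β, γ, hrep⟩
      unfold PB at hP
      have key : q*(l+2) + r + 2*α = (α+β+γ)*(l+2) + γ := by
        zify at hrep ⊢; linear_combination hrep
      rcases le_or_gt (α+β+γ) q with hu | hu
      · have h1 : (α+β+γ)*(l+2) ≤ q*(l+2) := Nat.mul_le_mul_right _ hu
        have h2 : γ ≤ α+β+γ := by omega
        have h3 : q < r := hP.1
        nlinarith [key, h1, h2, h3, hu]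
      · obtain ⟨v, hv1, hvu⟩ : ∃ v, 1 ≤ v ∧ α+β+γ = q + v := ⟨α+β+γ - q, by omega, by omega⟩
        rw [hvu] at key
        have key2 : v*(l+2) + γ = r + 2*α := by
          zify at key ⊢; linear_combination -key
        rcases le_or_gt 2 v with hv2 | hv2
        · have hident : v*(l+2) = v*l + 2*v := by ring
          have h2 : 2*l ≤ v*l := Nat.mul_le_mul_right _ hv2
          have hbnd : r + 2*q + 1 ≤ l + 2 := by omega
          have hag : α + γ ≤ q + v := by omega
          linarith
        · have hv : v = 1 := by omega
          subst hv
          have hag : α + γ ≤ q + 1 := by omega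
          omega
  rw [hset, Set.ncard_coe_finset, card_gapF]
  have : ∀ q ∈ range (l+2), ((range (l+2)).filter (PB (l+2) q)).card = cntB (l+2) q :=
    fun q _ => rfl
  rw [Finset.sum_congr rfl this, sumB _ (by omega)]


/-- For m ≥ 3, m/2 ≤ ℓ < m and ℓ ∈ {⌊(2m+2)/3⌋, m-2}, the genus of
⟨ℓ, m, m+1⟩ is (m²-m+4)/6 if m ≡ 2 (mod 3) and (m²-m)/6 otherwise. -/
theorem stmt11 (m l : ℕ) (hm : 3 ≤ m) (h1 : m ≤ 2 * l) (h2 : l < m)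
    (h3 : l = (2 * m + 2) / 3 ∨ l = m - 2) :
    {x : ℕ | ¬ ∃ α β γ : ℕ, x = α * l + β * m + γ * (m + 1)}.ncard
      = if m % 3 = 2 then (m ^ 2 - m + 4) / 6 else (m ^ 2 - m) / 6 := by
  have ht : (if m % 3 = 2 then (m ^ 2 - m + 4) / 6 else (m ^ 2 - m) / 6) = target m := rfl
  rw [ht]
  rcases h3 with h | h
  · exact caseA m l hm (by omega)
  · exact caseB m l (by omega) (by omega)
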